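/- Let p be an odd prime and let U, ψ, X̃_i, Z̃_i be as follows: ξ_1,…,ξ_n,η_1,…,η_n is a hyperbolic basis of (ZMod p)^{2n}; θx(i), θz(i) are powers of ω; X̃_i = θx(i)·XZⁿ(η_i), Z̃_i = θz(i)·XZⁿ(ξ_i); X̃(u) = Π_{i=1}^n X̃_i^{u_i}; ψ is a unit vector with Z̃_i·ψ = ψ for all i; and U is a unitary matrix indexed by (ZMod p)^n with U·δ_u = X̃(u)·ψ for all u ∈ (ZMod p)^n. Then U normalizes the Pauli group: for every j ∈ ℕ and every v ∈ (ZMod p)^{2n} there exist j' ∈ ℕ and v' ∈ (ZMod p)^{2n} such that U·(ω^j·XZⁿ(v))·U* = ω^{j'}·XZⁿ(v'). -/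

import Mathlib

open scoped BigOperators

/-- The phase space `(ZMod p)^n × (ZMod p)^n`, representing `(ZMod p)^{2n}`
written as pairs `(a|b)`. -/
abbrev PV (p n : ℕ) := (Fin n → ZMod p) × (Fin n → ZMod p)

/-- The symplectic inner product `⟨x,y⟩ = ∑ i, (b i * c i - a i * d i)`
for `x = (a|b)`, `y = (c|d)`. -/
def symp {p n : ℕ} (x y : PV p n) : ZMod p :=
  ∑ i, (x.2 i * y.1 i - x.1 i * y.2 i)

/-- `ξ_1,…,ξ_n, η_1,…,η_n` form a hyperbolic basis of `(ZMod p)^{2n}`. -/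
def IsHyperbolicBasis {p n : ℕ} (ξ η : Fin n → PV p n) : Prop :=
  LinearIndependent (ZMod p) (Sum.elim ξ η) ∧
  Submodule.span (ZMod p) (Set.range (Sum.elim ξ η)) = ⊤ ∧
  (∀ i j, symp (ξ i) (η j) = if i = j then 1 else 0) ∧
  (∀ i j, symp (ξ i) (ξ j) = 0) ∧
  (∀ i j, symp (η i) (η j) = 0)

/-- Symplectic orthogonal complement `W^⊥` of a submodule `W`. -/
def sympOrtho {p n : ℕ} (W : Submodule (ZMod p) (PV p n)) :
    Submodule (ZMod p) (PV p n) where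
  carrier := {y | ∀ x ∈ W, symp x y = 0}
  zero_mem' := by intro x hx; simp [symp]
  add_mem' := by
    intro a b ha hb x hx
    have h : symp x (a + b) = symp x a + symp x b := by
      unfold symp
      rw [← Finset.sum_add_distrib]
      refine Finset.sum_congr rfl ?_
      intro i _
      simp only [Prod.fst_add, Prod.snd_add, Pi.add_apply]
      ring
    rw [h, ha x hx, hb x hx, add_zero]
  smul_mem' := by
    intro c a ha x hx
    have h : symp x (c • a) = c * symp x a := by
      unfold symp
      rw [Finset.mul_sum]
      refine Finset.sum_congr rfl ?_
      intro i _
      simp only [Prod.smul_fst, Prod.smul_snd, Pi.smul_apply, smul_eq_mul]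
      ring
    rw [h, ha x hx, mul_zero]

/-- `ω = exp(2πi/p)`. -/
noncomputable def omg (p : ℕ) : ℂ := Complex.exp (2 * Real.pi * Complex.I / p)

/-- The matrix `XZⁿ(v)` for `v = (a|b)`: entry `(r,c)` equals `ω^{b·c}`
if `r = c + a`, and `0` otherwise. -/
noncomputable def XZ {p n : ℕ} (v : PV p n) :
    Matrix (Fin n → ZMod p) (Fin n → ZMod p) ℂ :=
  fun r c => if r = c + v.1 then omg p ^ (∑ i, v.2 i * c i).val else 0

/-- The standard basis vector `δ_u`. -/
def delta {p n : ℕ} (u : Fin n → ZMod p) : (Fin n → ZMod p) → ℂ :=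
  fun v => if v = u then 1 else 0

/-- Ordered product `∏_{i=1}^n (M i)^{u_i}` of matrices, powers via integer lifts. -/
noncomputable def prodPow {p n : ℕ} [NeZero p]
    (M : Fin n → Matrix (Fin n → ZMod p) (Fin n → ZMod p) ℂ)
    (u : Fin n → ZMod p) : Matrix (Fin n → ZMod p) (Fin n → ZMod p) ℂ :=
  ((List.finRange n).map (fun i => (M i) ^ (u i).val)).prod

/-- Splice `e ∈ (ZMod p)^{n-k}` and `x ∈ (ZMod p)^k` into a vector of `(ZMod p)^n`,
identifying `(ZMod p)^n` with `(ZMod p)^{n-k} × (ZMod p)^k`. -/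
def splice {p n k : ℕ} (hk : k ≤ n) (e : Fin (n - k) → ZMod p)
    (x : Fin k → ZMod p) : Fin n → ZMod p :=
  fun i => Fin.append e x (Fin.cast (by omega) i)

/-- The index `n - k + i` of `Fin n`, for `i : Fin k`. -/
def lastIdx {n k : ℕ} (hk : k ≤ n) (i : Fin k) : Fin n :=
  ⟨n - k + i.1, by have := i.2; omega⟩

/-- Kronecker (tensor) product of two vectors. -/
def vecKron {ι : Type*} (f g : ι → ℂ) : ι × ι → ℂ := fun q => f q.1 * g q.2

/-- Entrywise complex conjugate of a vector. -/
def conjVec {ι : Type*} (f : ι → ℂ) : ι → ℂ := fun i => (starRingEnd ℂ) (f i)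

/-!
Write `X(a) = XZ (a, 0)` (shift) and `Z(b) = XZ (0, b)` (clock), so that `XZ v = X(v.1) Z(v.2)`.
Every `θ • XZ w` with `θ` a power of `ω` is `XZ w` up to a phase, and two such matrices commute
up to the phase `ω ^ ⟨v, w⟩`. As the `η i` are pairwise orthogonal, the `X̃ i` commute, and as
`p` is odd, `(XZ w) ^ p = 1`; so `X̃(a + u) = X̃(a) X̃(u)`, which gives `U X(a) = X̃(a) U` on
every `δ_u`. Likewise `Z̃(b) X̃(u) ψ = ω ^ ⟨ξ(b), η(u)⟩ X̃(u) Z̃(b) ψ = ω ^ (b ⬝ᵥ u) X̃(u) ψ`,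
which gives `U Z(b) = Z̃(b) U`. Therefore `U XZ v U* = X̃(v.1) Z̃(v.2)`, again a Pauli matrix.
-/

open Matrix

section Phase

variable {p : ℕ}

lemma omg_pow_self (hp : p ≠ 0) : omg p ^ p = 1 := by
  have hpc : (p : ℂ) ≠ 0 := Nat.cast_ne_zero.mpr hp
  rw [omg, ← Complex.exp_nat_mul, mul_div_cancel₀ _ hpc, Complex.exp_two_pi_mul_I]

lemma omg_pow_val_add [NeZero p] (x y : ZMod p) :
    omg p ^ (x + y).val = omg p ^ x.val * omg p ^ y.val := by
  rw [ZMod.val_add, ← pow_eq_pow_mod _ (omg_pow_self (NeZero.ne p)), pow_add]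

end Phase

section Symplectic

variable {p n : ℕ}

def sympForm : LinearMap.BilinForm (ZMod p) (PV p n) :=
  LinearMap.mk₂ (ZMod p) symp
    (fun x y z => by simp only [symp, ← Finset.sum_add_distrib]; congr! 1; simp; ring)
    (fun c x y => by simp only [symp, smul_eq_mul, Finset.mul_sum]; congr! 1; simp; ring)
    (fun x y z => by simp only [symp, ← Finset.sum_add_distrib]; congr! 1; simp; ring)
    (fun c x y => by simp only [symp, smul_eq_mul, Finset.mul_sum]; congr! 1; simp; ring)

lemma symp_sum_smul_sum_smul {ξ η : Fin n → PV p n}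
    (hξη : ∀ i j, symp (ξ i) (η j) = if i = j then 1 else 0) (b u : Fin n → ZMod p) :
    symp (∑ i, b i • ξ i) (∑ j, u j • η j) = ∑ i, b i * u i := by
  change sympForm _ _ = _
  simp [sympForm, hξη, mul_comm]

end Symplectic

section Pauli

variable {p n : ℕ}

lemma XZ_zero : XZ (0 : PV p n) = 1 := by
  ext r c
  simp [XZ, Matrix.one_apply]

lemma delta_eq_single (u : Fin n → ZMod p) : delta u = Pi.single u 1 := by
  funext v
  simp [delta, Pi.single_apply]

variable [NeZero p]

lemma XZ_mul (v w : PV p n) :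
    XZ v * XZ w = omg p ^ (∑ i, v.2 i * w.1 i).val • XZ (v + w) := by
  ext r c
  simp only [XZ, Matrix.mul_apply, Matrix.smul_apply, smul_eq_mul, mul_ite, mul_zero,
    Finset.sum_ite_eq', Finset.mem_univ, if_true, ite_mul, zero_mul]
  rw [show c + (v + w).1 = c + w.1 + v.1 by rw [Prod.fst_add]; abel]
  split_ifs
  · rw [← omg_pow_val_add, ← omg_pow_val_add, ← Finset.sum_add_distrib,
      ← Finset.sum_add_distrib]
    congr 2
    refine Finset.sum_congr rfl fun i _ => ?_
    simp only [Prod.snd_add, Pi.add_apply]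
    ring
  · rfl

lemma XZ_fst_mul_XZ_snd (v : PV p n) : XZ (v.1, 0) * XZ (0, v.2) = XZ v := by
  simp [XZ_mul]

lemma XZ_mul_comm (v w : PV p n) :
    XZ v * XZ w = omg p ^ (symp v w).val • (XZ w * XZ v) := by
  rw [XZ_mul, XZ_mul, add_comm w v, smul_smul, ← omg_pow_val_add]
  congr 3
  simp only [symp, ← Finset.sum_add_distrib]
  exact Finset.sum_congr rfl fun i _ => by ring

lemma XZ_pow (v : PV p n) (k : ℕ) :
    XZ v ^ k =
      omg p ^ ((k.choose 2 : ZMod p) * ∑ i, v.2 i * v.1 i).val • XZ ((k : ZMod p) • v) := by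
  induction k with
  | zero => simp [XZ_zero]
  | succ k ih =>
    rw [pow_succ', ih, Matrix.mul_smul, XZ_mul, smul_smul, ← omg_pow_val_add,
      Nat.choose_succ_succ', Nat.choose_one_right]
    congr 3
    · push_cast
      simp only [Prod.smul_fst, Pi.smul_apply, smul_eq_mul, add_mul, Finset.mul_sum,
        ← Finset.sum_add_distrib]
      exact Finset.sum_congr rfl fun i _ => by ring
    · push_cast; module

lemma XZ_pow_prime [Fact p.Prime] (hodd : Odd p) (v : PV p n) : XZ v ^ p = 1 := by
  have hp : p.Prime := Fact.out
  have hchoose : ((p.choose 2 : ℕ) : ZMod p) = 0 :=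
    (ZMod.natCast_eq_zero_iff _ _).mpr <|
      hp.dvd_choose_self two_ne_zero (hp.odd_iff.mp hodd)
  rw [XZ_pow, hchoose, ZMod.natCast_self, zero_mul, zero_smul, ZMod.val_zero, pow_zero, one_smul,
    XZ_zero]

lemma XZ_mulVec_delta (v : PV p n) (u : Fin n → ZMod p) :
    XZ v *ᵥ delta u = omg p ^ (∑ i, v.2 i * u i).val • delta (u + v.1) := by
  funext r
  simp [delta_eq_single, XZ, Pi.single_apply]

end Pauli

section PhaseXZ

variable {p n : ℕ}

def IsPhaseXZ (v : PV p n) (M : Matrix (Fin n → ZMod p) (Fin n → ZMod p) ℂ) : Prop :=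
  ∃ j : ℕ, M = omg p ^ j • XZ v

lemma isPhaseXZ_smul {θ : ℂ} (hθ : ∃ m : ℕ, θ = omg p ^ m) (v : PV p n) :
    IsPhaseXZ v (θ • XZ v) := by
  obtain ⟨m, rfl⟩ := hθ
  exact ⟨m, rfl⟩

variable [NeZero p] {v w : PV p n} {A B : Matrix (Fin n → ZMod p) (Fin n → ZMod p) ℂ}

lemma IsPhaseXZ.mul (hA : IsPhaseXZ v A) (hB : IsPhaseXZ w B) : IsPhaseXZ (v + w) (A * B) := by
  obtain ⟨j, rfl⟩ := hA
  obtain ⟨k, rfl⟩ := hB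
  refine ⟨j + k + (∑ i, v.2 i * w.1 i).val, ?_⟩
  rw [smul_mul_smul, XZ_mul, smul_smul, ← pow_add, ← pow_add]

lemma IsPhaseXZ.pow (hA : IsPhaseXZ v A) (k : ℕ) : IsPhaseXZ ((k : ZMod p) • v) (A ^ k) := by
  obtain ⟨j, rfl⟩ := hA
  exact ⟨j * k + _, by rw [smul_pow, XZ_pow, smul_smul, ← pow_mul, ← pow_add]⟩

lemma IsPhaseXZ.pow_prime [Fact p.Prime] (hodd : Odd p) (hA : IsPhaseXZ v A) : A ^ p = 1 := by
  obtain ⟨j, rfl⟩ := hA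
  rw [smul_pow, XZ_pow_prime hodd, ← pow_mul, mul_comm, pow_mul, omg_pow_self (NeZero.ne p),
    one_pow, one_smul]

lemma IsPhaseXZ.mul_comm (hA : IsPhaseXZ v A) (hB : IsPhaseXZ w B) :
    A * B = omg p ^ (symp v w).val • (B * A) := by
  obtain ⟨j, rfl⟩ := hA
  obtain ⟨k, rfl⟩ := hB
  rw [smul_mul_smul, smul_mul_smul, XZ_mul_comm, smul_comm, _root_.mul_comm (omg p ^ j)]

lemma isPhaseXZ_prodPow {M : Fin n → Matrix (Fin n → ZMod p) (Fin n → ZMod p) ℂ}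
    {w : Fin n → PV p n} (hM : ∀ i, IsPhaseXZ (w i) (M i)) (u : Fin n → ZMod p) :
    IsPhaseXZ (∑ i, u i • w i) (prodPow M u) := by
  rw [Fin.sum_univ_def, prodPow]
  induction List.finRange n with
  | nil => exact ⟨0, by simp [XZ_zero]⟩
  | cons i l ih =>
    have hi := (hM i).pow (u i).val
    rw [ZMod.natCast_zmod_val] at hi
    simpa using hi.mul ih

end PhaseXZ

section ProdPow

variable {p n : ℕ} [NeZero p] {M : Fin n → Matrix (Fin n → ZMod p) (Fin n → ZMod p) ℂ}

lemma List.prod_map_mul_of_commute {G ι : Type*} [Monoid G] (l : List ι) (f g : ι → G)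
    (h : ∀ i ∈ l, ∀ j ∈ l, Commute (g i) (f j)) :
    (l.map fun i => f i * g i).prod = (l.map f).prod * (l.map g).prod := by
  induction l with
  | nil => simp
  | cons a t ih =>
    have hc : Commute (g a) (t.map f).prod :=
      Commute.list_prod_right _ _ fun x hx => by
        obtain ⟨j, hj, rfl⟩ := List.mem_map.mp hx
        exact h a List.mem_cons_self j (List.mem_cons_of_mem _ hj)
    simp only [List.map_cons, List.prod_cons]
    rw [ih fun i hi j hj => h i (List.mem_cons_of_mem _ hi) j (List.mem_cons_of_mem _ hj),
      mul_assoc, mul_assoc, hc.left_comm]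

lemma prodPow_add (hcomm : ∀ i j, Commute (M i) (M j)) (horder : ∀ i, M i ^ p = 1)
    (a u : Fin n → ZMod p) : prodPow M (a + u) = prodPow M a * prodPow M u := by
  rw [prodPow, prodPow, prodPow,
    ← List.prod_map_mul_of_commute _ _ _ fun i _ j _ => (hcomm i j).pow_pow _ _]
  refine congrArg _ (List.map_congr_left fun i _ => ?_)
  rw [Pi.add_apply, ZMod.val_add, ← pow_eq_pow_mod _ (horder i), pow_add]

lemma prodPow_mulVec_of_forall_mulVec_eq {ψ : (Fin n → ZMod p) → ℂ} (h : ∀ i, M i *ᵥ ψ = ψ)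
    (u : Fin n → ZMod p) : prodPow M u *ᵥ ψ = ψ := by
  have hpow (i : Fin n) (k : ℕ) : (M i ^ k) *ᵥ ψ = ψ := by
    induction k with
    | zero => simp
    | succ k ih => rw [pow_succ, ← mulVec_mulVec, h, ih]
  rw [prodPow]
  induction List.finRange n with
  | nil => simp
  | cons i l ih => rw [List.map_cons, List.prod_cons, ← mulVec_mulVec, ih, hpow]

end ProdPow

section Encoding

variable {p n : ℕ} [NeZero p] {U : Matrix (Fin n → ZMod p) (Fin n → ZMod p) ℂ}
  {M : Fin n → Matrix (Fin n → ZMod p) (Fin n → ZMod p) ℂ} {ψ : (Fin n → ZMod p) → ℂ}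

lemma mul_XZ_shift (hU : ∀ u, U *ᵥ delta u = prodPow M u *ᵥ ψ)
    (hcomm : ∀ i j, Commute (M i) (M j)) (horder : ∀ i, M i ^ p = 1) (a : Fin n → ZMod p) :
    U * XZ (a, 0) = prodPow M a * U := by
  refine ext_of_mulVec_single fun u => ?_
  simp only [← delta_eq_single, ← mulVec_mulVec, XZ_mulVec_delta, Pi.zero_apply, zero_mul,
    Finset.sum_const_zero, ZMod.val_zero, pow_zero, one_smul, hU]
  rw [add_comm, prodPow_add hcomm horder, mulVec_mulVec]

lemma mul_XZ_clock (hU : ∀ u, U *ᵥ delta u = prodPow M u *ᵥ ψ) {b : Fin n → ZMod p}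
    {N : Matrix (Fin n → ZMod p) (Fin n → ZMod p) ℂ} (hN : N *ᵥ ψ = ψ)
    (hcomm : ∀ u, N * prodPow M u = omg p ^ (∑ i, b i * u i).val • (prodPow M u * N)) :
    U * XZ (0, b) = N * U := by
  refine ext_of_mulVec_single fun u => ?_
  simp only [← delta_eq_single, ← mulVec_mulVec, XZ_mulVec_delta, add_zero, mulVec_smul, hU]
  rw [mulVec_mulVec, hcomm, smul_mulVec, ← mulVec_mulVec, hN]

end Encoding

theorem stmt6_general (p n : ℕ) [Fact p.Prime] (hodd : Odd p)
    (ξ η : Fin n → PV p n) (hb : IsHyperbolicBasis ξ η)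
    (θx θz : Fin n → ℂ)
    (hθx : ∀ i, ∃ m : ℕ, θx i = omg p ^ m)
    (hθz : ∀ i, ∃ m : ℕ, θz i = omg p ^ m)
    (ψ : (Fin n → ZMod p) → ℂ)
    (hψ : ∀ i, (θz i • XZ (ξ i)).mulVec ψ = ψ)
    (U : Matrix (Fin n → ZMod p) (Fin n → ZMod p) ℂ)
    (hU : U * U.conjTranspose = 1 ∧ U.conjTranspose * U = 1)
    (hUdef : ∀ u : Fin n → ZMod p,
      U.mulVec (delta u) = (prodPow (fun i => θx i • XZ (η i)) u).mulVec ψ) :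
    ∀ (j : ℕ) (v : PV p n), ∃ (j' : ℕ) (v' : PV p n),
      U * (omg p ^ j • XZ v) * U.conjTranspose = omg p ^ j' • XZ v' := by
  have : NeZero p := ⟨(Fact.out : p.Prime).ne_zero⟩
  obtain ⟨-, -, hξη, -, hηη⟩ := hb
  have hX (i : Fin n) : IsPhaseXZ (η i) (θx i • XZ (η i)) := isPhaseXZ_smul (hθx i) _
  have hZ (i : Fin n) : IsPhaseXZ (ξ i) (θz i • XZ (ξ i)) := isPhaseXZ_smul (hθz i) _
  have hcomm (i j : Fin n) : Commute (θx i • XZ (η i)) (θx j • XZ (η j)) := by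
    rw [Commute, SemiconjBy, (hX i).mul_comm (hX j), hηη, ZMod.val_zero, pow_zero, one_smul]
  have hshift := mul_XZ_shift hUdef hcomm fun i => (hX i).pow_prime hodd
  have hclock (b : Fin n → ZMod p) :=
    mul_XZ_clock hUdef (prodPow_mulVec_of_forall_mulVec_eq hψ b) fun u => by
      rw [(isPhaseXZ_prodPow hZ b).mul_comm (isPhaseXZ_prodPow hX u), symp_sum_smul_sum_smul hξη]
  intro j v
  obtain ⟨m, hm⟩ := (isPhaseXZ_prodPow hX v.1).mul (isPhaseXZ_prodPow hZ v.2)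
  refine ⟨j + m, ∑ i, v.1 i • η i + ∑ i, v.2 i • ξ i, ?_⟩
  calc U * (omg p ^ j • XZ v) * U.conjTranspose
      = omg p ^ j • (U * XZ (v.1, 0) * XZ (0, v.2) * U.conjTranspose) := by
        rw [mul_assoc U (XZ _), XZ_fst_mul_XZ_snd, Matrix.mul_smul, Matrix.smul_mul]
    _ = omg p ^ j • (prodPow (fun i => θx i • XZ (η i)) v.1
          * prodPow (fun i => θz i • XZ (ξ i)) v.2 * (U * U.conjTranspose)) := by
        rw [hshift, mul_assoc _ U, hclock]
        simp only [mul_assoc]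
    _ = _ := by rw [hU.1, mul_one, hm, smul_smul, ← pow_add]

/-- the encoding operator `U` constructed from a hyperbolic basis
normalizes the Pauli group. -/
theorem stmt6 (p n : ℕ) [Fact p.Prime] (hodd : Odd p)
    (ξ η : Fin n → PV p n) (hb : IsHyperbolicBasis ξ η)
    (θx θz : Fin n → ℂ)
    (hθx : ∀ i, ∃ m : ℕ, θx i = omg p ^ m)
    (hθz : ∀ i, ∃ m : ℕ, θz i = omg p ^ m)
    (ψ : (Fin n → ZMod p) → ℂ)
    (hψnorm : ∑ v, Complex.normSq (ψ v) = 1)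
    (hψ : ∀ i, (θz i • XZ (ξ i)).mulVec ψ = ψ)
    (U : Matrix (Fin n → ZMod p) (Fin n → ZMod p) ℂ)
    (hU : U * U.conjTranspose = 1 ∧ U.conjTranspose * U = 1)
    (hUdef : ∀ u : Fin n → ZMod p,
      U.mulVec (delta u) = (prodPow (fun i => θx i • XZ (η i)) u).mulVec ψ) :
    ∀ (j : ℕ) (v : PV p n), ∃ (j' : ℕ) (v' : PV p n),
      U * (omg p ^ j • XZ v) * U.conjTranspose = omg p ^ j' • XZ v' :=
  stmt6_general p n hodd ξ η hb θx θz hθx hθz ψ hψ U hU hUdef
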